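/- Let μ and μ' be (h-1)-dimensional projective subspaces of PG(2h-1, q) such that B(μ) = B(μ') (they meet exactly the same elements of a fixed Desarguesian (h-1)-spread D) and such that μ ∩ μ' is a hyperplane of some spread element of D. Then μ = μ'. -/
import Mathlib


open Projectivization Module

/-- Under field reduction, `PG(2h-1, q)` is the projective space of the `K`-vector space
`L × L`, and the elements of the Desarguesian `(h-1)`-spread are the subspaces
`P.submodule` (restricted to `K`-scalars) for points `P` of `PG(1, q^h)`.
`BSet K L μ` is the set of spread elements meeting the subspace `μ` nontrivially,
identified with the corresponding points of `PG(1, q^h)`. -/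
def BSet (K L : Type*) [Field K] [Field L] [Algebra K L]
    (μ : Submodule K (L × L)) : Set (Projectivization L (L × L)) :=
  {P | μ ⊓ (P.submodule.restrictScalars K) ≠ ⊥}

/-- A nonzero vector lying in the submodule of a projective point determines that point. -/
lemma eq_mk_of_mem_submodule {F V : Type*} [Field F] [AddCommGroup V] [Module F V]
    (Q : Projectivization F V) {x : V} (hx : x ≠ 0) (h : x ∈ Q.submodule) :
    Q = Projectivization.mk F x hx := by
  induction Q using Projectivization.ind with
  | h v hv =>
    rw [Projectivization.submodule_mk] at h
    obtain ⟨c, hc⟩ := Submodule.mem_span_singleton.1 h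
    exact ((Projectivization.mk_eq_mk_iff' F x v hx hv).2 ⟨c, hc⟩).symm

lemma mem_BSet_iff {K L : Type*} [Field K] [Field L] [Algebra K L]
    (μ : Submodule K (L × L)) (Q : Projectivization L (L × L)) :
    Q ∈ BSet K L μ ↔ ∃ x ∈ μ, x ≠ 0 ∧ x ∈ Q.submodule := by
  constructor
  · intro hQ
    obtain ⟨x, hx, hx0⟩ := Submodule.exists_mem_ne_zero_of_ne_bot hQ
    exact ⟨x, (Submodule.mem_inf.1 hx).1, hx0, (Submodule.mem_inf.1 hx).2⟩
  · rintro ⟨x, hxμ, hx0, hxQ⟩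
    intro hbot
    have : x ∈ (⊥ : Submodule K (L × L)) := hbot ▸ Submodule.mem_inf.2 ⟨hxμ, hxQ⟩
    exact hx0 (Submodule.mem_bot _ |>.1 this)

set_option maxHeartbeats 1600000 in
set_option synthInstance.maxHeartbeats 400000 in
/-- if `μ, μ'` are `(h-1)`-dimensional projective subspaces of `PG(2h-1,q)`
meeting the same Desarguesian spread elements, and `μ ⊓ μ'` is a hyperplane of some
spread element, then `μ = μ'`. -/
theorem stmt6 (K L : Type*) [Field K] [Field L] [Algebra K L] [Fintype K] [Fintype L]
    (h : ℕ) (hrank : Module.finrank K L = h)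
    (μ μ' : Submodule K (L × L))
    (hμ : Module.finrank K μ = h) (hμ' : Module.finrank K μ' = h)
    (hB : BSet K L μ = BSet K L μ')
    (hhyp : ∃ P : Projectivization L (L × L),
      μ ⊓ μ' ≤ P.submodule.restrictScalars K ∧
      Module.finrank K (μ ⊓ μ' : Submodule K (L × L)) = h - 1) :
    μ = μ' := by
  classical
  obtain ⟨P, hWle, hWrank⟩ := hhyp
  have h0 : 0 < h := hrank ▸ Module.finrank_pos
  set s : L × L := P.rep with hs
  have hs0 : s ≠ 0 := P.rep_nonzero
  set S : Submodule K (L × L) := P.submodule.restrictScalars K with hSdef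
  -- the K-linear map c ↦ c • s
  set f : L →ₗ[K] L × L :=
    { toFun := fun c => c • s
      map_add' := fun a b => add_smul a b s
      map_smul' := fun k c => smul_assoc k c s } with hfdef
  have hfapp : ∀ c : L, f c = c • s := fun c => rfl
  have hf : Function.Injective f := by
    intro a b hab
    by_contra hne
    have hsub : (a - b) • s = 0 := by
      rw [sub_smul]; rw [hfapp, hfapp] at hab; rw [hab, sub_self]
    have : s = 0 := by
      have := congrArg (fun v => (a - b)⁻¹ • v) hsub
      simpa [smul_smul, inv_mul_cancel₀ (sub_ne_zero.2 hne)] using this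
    exact hs0 this
  have hmemS : ∀ x : L × L, x ∈ S ↔ ∃ c : L, c • s = x := by
    intro x
    rw [hSdef, Submodule.restrictScalars_mem, Projectivization.submodule_eq,
      Submodule.mem_span_singleton]
  have hrange : LinearMap.range f = S := by
    ext x
    rw [LinearMap.mem_range, hmemS]
    constructor
    · rintro ⟨c, rfl⟩; exact ⟨c, rfl⟩
    · rintro ⟨c, rfl⟩; exact ⟨c, rfl⟩
  have hSrank : finrank K S = h := by
    rw [← hrange, LinearMap.finrank_range_of_inj hf, hrank]
  -- key lemma: if ν = S and BSet ν = BSet ν' then ν' ≤ S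
  have key : ∀ ν' : Submodule K (L × L), BSet K L S = BSet K L ν' → ν' ≤ S := by
    intro ν' hBeq x hx
    by_cases hx0 : x = 0
    · rw [hx0]; exact S.zero_mem
    · have hQ : Projectivization.mk L x hx0 ∈ BSet K L ν' :=
        (mem_BSet_iff ν' _).2 ⟨x, hx, hx0, by
          rw [Projectivization.submodule_mk]; exact Submodule.mem_span_singleton_self x⟩
      rw [← hBeq] at hQ
      obtain ⟨y, hyS, hy0, hyQ⟩ := (mem_BSet_iff S _).1 hQ
      have hPy : P = Projectivization.mk L y hy0 :=
        eq_mk_of_mem_submodule P hy0 (by rwa [hSdef, Submodule.restrictScalars_mem] at hyS)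
      have hQy : Projectivization.mk L x hx0 = Projectivization.mk L y hy0 :=
        eq_mk_of_mem_submodule _ hy0 hyQ
      have : x ∈ P.submodule := by
        rw [hPy, ← hQy, Projectivization.submodule_mk]
        exact Submodule.mem_span_singleton_self x
      rwa [hSdef, Submodule.restrictScalars_mem]
  by_cases hμS : μ ≤ S
  · have hμeq : μ = S := Submodule.eq_of_le_of_finrank_eq hμS (by rw [hμ, hSrank])
    have hμ'le : μ' ≤ S := key μ' (hμeq ▸ hB)
    rw [hμeq, Submodule.eq_of_le_of_finrank_eq hμ'le (by rw [hμ', hSrank])]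
  by_cases hμ'S : μ' ≤ S
  · have hμ'eq : μ' = S := Submodule.eq_of_le_of_finrank_eq hμ'S (by rw [hμ', hSrank])
    have hμle : μ ≤ S := key μ (hμ'eq ▸ hB.symm)
    rw [hμ'eq, Submodule.eq_of_le_of_finrank_eq hμle (by rw [hμ, hSrank])]
  -- main case
  obtain ⟨u, huμ, huS⟩ := SetLike.not_le_iff_exists.1 hμS
  obtain ⟨u', hu'μ, hu'S⟩ := SetLike.not_le_iff_exists.1 hμ'S
  have hu0 : u ≠ 0 := fun hu => huS (hu ▸ S.zero_mem)
  have hu'0 : u' ≠ 0 := fun hu => hu'S (hu ▸ S.zero_mem)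
  set W : Submodule K (L × L) := μ ⊓ μ' with hWdef
  -- decomposition lemma
  have hdecomp : ∀ (ν : Submodule K (L × L)) (v : L × L), finrank K ν = h → v ∈ ν → v ∉ S →
      W ≤ ν → ν = W ⊔ Submodule.span K {v} := by
    intro ν v hνr hvν hvS hWν
    have hle : W ⊔ Submodule.span K {v} ≤ ν :=
      sup_le hWν ((Submodule.span_le).2 (Set.singleton_subset_iff.2 hvν))
    have hinf : W ⊓ Submodule.span K {v} = ⊥ := by
      rw [Submodule.eq_bot_iff]
      intro x hx
      obtain ⟨hxW, hxv⟩ := Submodule.mem_inf.1 hx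
      obtain ⟨t, rfl⟩ := Submodule.mem_span_singleton.1 hxv
      by_cases ht : t = 0
      · rw [ht, zero_smul]
      · exfalso
        apply hvS
        apply hWle
        have hW2 : t⁻¹ • t • v ∈ W := W.smul_mem _ hxW
        rwa [smul_smul, inv_mul_cancel₀ ht, one_smul] at hW2
    have hfr : finrank K ↥(W ⊔ Submodule.span K {v}) = h := by
      have := Submodule.finrank_sup_add_finrank_inf_eq W (Submodule.span K {v})
      rw [hinf, finrank_bot, add_zero, hWrank, finrank_span_singleton
        (fun hv0 => hvS (by rw [hv0]; exact S.zero_mem))] at this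
      omega
    exact (Submodule.eq_of_le_of_finrank_eq hle (by rw [hfr, hνr])).symm
  have hμeq : μ = W ⊔ Submodule.span K {u} :=
    hdecomp μ u hμ huμ huS inf_le_left
  have hμ'eq : μ' = W ⊔ Submodule.span K {u'} :=
    hdecomp μ' u' hμ' hu'μ hu'S inf_le_right
  -- H : the K-subspace of L corresponding to W
  set H : Submodule K L := Submodule.comap f W with hHdef
  have hmemH : ∀ lam : L, lam ∈ H ↔ lam • s ∈ W := fun lam => Iff.rfl
  have hWH : Submodule.map f H = W := by
    rw [hHdef, Submodule.map_comap_eq, hrange, inf_eq_right.2 hWle]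
  have hHrank : finrank K H = h - 1 := by
    rw [← hWrank, ← hWH]
    exact (Submodule.equivMapOfInjective f hf H).finrank_eq
  -- s, u independent over L
  have hindep : ∀ a b : L, a • s + b • u = 0 → a = 0 ∧ b = 0 := by
    intro a b hab
    by_cases hb : b = 0
    · refine ⟨?_, hb⟩
      rw [hb, zero_smul, add_zero] at hab
      exact (smul_eq_zero.1 hab).resolve_right hs0
    · exfalso
      apply huS
      rw [hmemS]
      refine ⟨-(b⁻¹ * a), ?_⟩
      have : b • u = -(a • s) := by
        rw [eq_neg_iff_add_eq_zero, add_comm]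
        exact hab
      have hu' : u = b⁻¹ • (b • u) := by rw [smul_smul, inv_mul_cancel₀ hb, one_smul]
      rw [hu', this, smul_neg, smul_smul, ← neg_smul]
  -- every vector is a combination of s and u
  have hspan : ∀ v : L × L, ∃ a b : L, a • s + b • u = v := by
    have li : LinearIndependent L ![s, u] := by
      rw [linearIndependent_fin2]
      refine ⟨by simpa using hu0, fun a ha => ?_⟩
      simp only [Matrix.cons_val_one, Matrix.head_cons, Matrix.cons_val_zero] at ha
      have := hindep 1 (-a) (by rw [one_smul, neg_smul, ha]; exact add_neg_cancel s)
      exact absurd this.1 one_ne_zero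
    have hcard : Fintype.card (Fin 2) = finrank L (L × L) := by
      rw [Module.finrank_prod, Module.finrank_self]
      simp
    intro v
    have hvmem : v ∈ Submodule.span L (Set.range ![s, u]) := by
      have htop : Submodule.span L (Set.range ![s, u]) = ⊤ := by
        rw [← coe_basisOfLinearIndependentOfCardEqFinrank li hcard]
        exact (basisOfLinearIndependentOfCardEqFinrank li hcard).span_eq
      rw [htop]
      trivial
    have : Set.range ![s, u] = {s, u} := by
      ext x; simp [Matrix.range_cons, Matrix.range_empty, or_comm]
    rw [this, Submodule.mem_span_pair] at hvmem
    obtain ⟨a, b, hab⟩ := hvmem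
    exact ⟨a, b, hab⟩
  obtain ⟨m₀, c₀, hu'ab⟩ := hspan u'
  have hc₀ : c₀ ≠ 0 := by
    intro hc
    apply hu'S
    rw [hmemS]
    exact ⟨m₀, by rw [← hu'ab, hc, zero_smul, add_zero]⟩
  -- the key combinatorial step
  have hH : ∀ lam ∈ H, c₀ * lam - m₀ ∈ H := by
    intro lam hlam
    set v : L × L := lam • s + u with hv
    have hv0 : v ≠ 0 := by
      intro hv0
      have := hindep lam 1 (by rw [one_smul]; exact hv0)
      simpa using this.2
    have hvμ : v ∈ μ := μ.add_mem (Submodule.mem_inf.1 ((hmemH lam).1 hlam)).1 huμ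
    have hQ : Projectivization.mk L v hv0 ∈ BSet K L μ :=
      (mem_BSet_iff μ _).2 ⟨v, hvμ, hv0, by
        rw [Projectivization.submodule_mk]; exact Submodule.mem_span_singleton_self v⟩
    rw [hB] at hQ
    obtain ⟨z, hzμ', hz0, hzQ⟩ := (mem_BSet_iff μ' _).1 hQ
    rw [Projectivization.submodule_mk, Submodule.mem_span_singleton] at hzQ
    obtain ⟨d, hd⟩ := hzQ
    have hd0 : d ≠ 0 := by rintro rfl; rw [zero_smul] at hd; exact hz0 hd.symm
    -- decompose z in μ' = W ⊔ K u'
    rw [hμ'eq] at hzμ'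
    obtain ⟨w, hw, y, hy, hzwy⟩ := Submodule.mem_sup.1 hzμ'
    obtain ⟨t, rfl⟩ := Submodule.mem_span_singleton.1 hy
    obtain ⟨lw, hlw, hlws⟩ := Submodule.mem_map.1 (hWH ▸ hw)
    -- expand both sides in the basis s, u
    have h1 : d • v = (d * lam) • s + d • u := by
      rw [hv, smul_add, smul_smul]
    have h2 : w + t • u' = (lw + t • m₀) • s + (t • c₀) • u := by
      rw [← hlws, hfapp, ← hu'ab, smul_add, add_smul, smul_assoc, smul_assoc]
      abel
    have heq : (d * lam) • s + d • u = (lw + t • m₀) • s + (t • c₀) • u := by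
      rw [← h1, hd, ← hzwy, h2]
    have hexp : (d * lam - (lw + t • m₀)) • s + (d - t • c₀) • u = 0 :=
      calc (d * lam - (lw + t • m₀)) • s + (d - t • c₀) • u
          = ((d * lam) • s + d • u) - ((lw + t • m₀) • s + (t • c₀) • u) := by
            rw [sub_smul, sub_smul]; abel
        _ = 0 := sub_eq_zero_of_eq heq
    obtain ⟨he1, he2⟩ := hindep _ _ hexp
    set a : L := algebraMap K L t with ha
    have ht0 : t ≠ 0 := by
      rintro rfl
      rw [Algebra.smul_def, map_zero, zero_mul, sub_zero] at he2
      exact hd0 he2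
    have ha0 : a ≠ 0 := fun hc => ht0 ((map_eq_zero (algebraMap K L)).1 (ha ▸ hc))
    have hlw2 : lw = a * (c₀ * lam - m₀) := by
      have hd' : d = a * c₀ := by
        rw [Algebra.smul_def] at he2
        have := sub_eq_zero.1 he2
        rw [this, ha]
      have hl1 : d * lam = lw + a * m₀ := by
        rw [Algebra.smul_def] at he1
        have := sub_eq_zero.1 he1
        rw [this, ha]
      rw [hd'] at hl1
      linear_combination -hl1
    have : c₀ * lam - m₀ = t⁻¹ • lw := by
      rw [Algebra.smul_def, map_inv₀, ← ha, hlw2, ← mul_assoc, inv_mul_cancel₀ ha0, one_mul]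
    rw [this]
    exact H.smul_mem _ hlw
  -- consequences of the key step
  have hm₀H : m₀ ∈ H := by
    have := hH 0 H.zero_mem
    rw [mul_zero, zero_sub] at this
    exact neg_mem_iff.1 this
  have hc₀mul : ∀ lam ∈ H, c₀ * lam ∈ H := by
    intro lam hl
    have := H.add_mem (hH lam hl) hm₀H
    rwa [sub_add_cancel] at this
  -- the subalgebra generated by c₀ stabilizes H
  set F : Subalgebra K L := Algebra.adjoin K {c₀} with hFdef
  have hFmul : ∀ x ∈ F, ∀ lam ∈ H, x * lam ∈ H := by
    intro x hx
    induction hx using Algebra.adjoin_induction with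
    | mem y hy =>
      intro lam hl
      rw [Set.mem_singleton_iff] at hy
      exact hy ▸ hc₀mul lam hl
    | algebraMap r =>
      intro lam hl
      rw [← Algebra.smul_def]
      exact H.smul_mem r hl
    | add x y hx hy ihx ihy =>
      intro lam hl
      rw [add_mul]
      exact H.add_mem (ihx lam hl) (ihy lam hl)
    | mul x y hx hy ihx ihy =>
      intro lam hl
      rw [mul_assoc]
      exact ihx _ (ihy lam hl)
  haveI : Finite ↥F := Subtype.finite
  letI : Field ↥F := (Finite.isField_of_domain ↥F).toField
  have hdvd1 : finrank K ↥F ∣ h :=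
    ⟨finrank ↥F L, by rw [← hrank, ← Module.finrank_mul_finrank K ↥F L]⟩
  set H' : Submodule ↥F L :=
    { carrier := H
      add_mem' := fun ha hb => H.add_mem ha hb
      zero_mem' := H.zero_mem
      smul_mem' := fun c x hx => by
        have : (c : L) * x ∈ H := hFmul (c : L) c.2 x hx
        simpa [Algebra.smul_def] using this } with hH'def
  have hres : H'.restrictScalars K = H := by
    ext x
    exact Iff.rfl
  have hdvd2 : finrank K ↥F ∣ h - 1 := by
    refine ⟨finrank ↥F ↥(H'.restrictScalars K), ?_⟩
    rw [← hHrank, ← hres]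
    exact (Module.finrank_mul_finrank K ↥F ↥(H'.restrictScalars K)).symm
  have hdF : finrank K ↥F = 1 := by
    have h1 : finrank K ↥F ∣ h - (h - 1) := Nat.dvd_sub hdvd1 hdvd2
    rw [show h - (h - 1) = 1 by omega] at h1
    exact Nat.dvd_one.1 h1
  have hFbot : F = ⊥ := Subalgebra.eq_bot_of_finrank_one hdF
  have hc₀F : c₀ ∈ F := hFdef ▸ Algebra.self_mem_adjoin_singleton K c₀
  obtain ⟨k, hk⟩ := Algebra.mem_bot.1 (hFbot ▸ hc₀F)
  -- conclude
  have hu'μ2 : u' ∈ μ := by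
    rw [← hu'ab]
    refine μ.add_mem ?_ ?_
    · exact (Submodule.mem_inf.1 ((hmemH m₀).1 hm₀H)).1
    · rw [← hk, algebraMap_smul]
      exact μ.smul_mem k huμ
  have hle : μ' ≤ μ := by
    rw [hμ'eq]
    exact sup_le inf_le_left ((Submodule.span_le).2 (Set.singleton_subset_iff.2 hu'μ2))
  exact (Submodule.eq_of_le_of_finrank_eq hle (by rw [hμ', hμ])).symm
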